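/- For g ≥ 1 and d ≥ 2, S_g[d] is contained in the normal closure of Y_{1,1}^d in urSp(2g). -/

import Mathlib

open Matrix

/-- The standard symplectic form matrix `J = [[0, I],[-I, 0]]`. -/
def Jmat (g : ℕ) : Matrix (Fin g ⊕ Fin g) (Fin g ⊕ Fin g) ℤ := fromBlocks 0 1 (-1) 0

/-- `Sp(2g, ℤ)` as a set of integer matrices. -/
def SpSet (g : ℕ) : Set (Matrix (Fin g ⊕ Fin g) (Fin g ⊕ Fin g) ℤ) :=
  {X | IsUnit X.det ∧ Xᵀ * Jmat g * X = Jmat g}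

/-- `urSp(2g)`: symplectic matrices with vanishing lower-left `g × g` block. -/
def urSpSet (g : ℕ) : Set (Matrix (Fin g ⊕ Fin g) (Fin g ⊕ Fin g) ℤ) :=
  {X | X ∈ SpSet g ∧ X.toBlocks₂₁ = 0}

/-- The explicit description: matrices `[[A, B],[0, ᵗA⁻¹]]` with `A` unimodular and
`A⁻¹ * B` symmetric. -/
def urSpSet' (g : ℕ) : Set (Matrix (Fin g ⊕ Fin g) (Fin g ⊕ Fin g) ℤ) :=
  {X | ∃ A B : Matrix (Fin g) (Fin g) ℤ, IsUnit A.det ∧ (A⁻¹ * B).IsSymm ∧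
    X = fromBlocks A B 0 (A⁻¹)ᵀ}

/-- `S_{i,j}`: the symmetric matrix with `1` at `(i,j)` and `(j,i)` and `0` elsewhere
(just a `1` at `(i,i)` when `i = j`). -/
def Smat (g : ℕ) (i j : Fin g) : Matrix (Fin g) (Fin g) ℤ :=
  Matrix.of fun k l => if (k = i ∧ l = j) ∨ (k = j ∧ l = i) then 1 else 0

/-- The elementary matrix `E_{i,j} = I + ℰ_{i,j}`. -/
def Emat (g : ℕ) (i j : Fin g) : Matrix (Fin g) (Fin g) ℤ := 1 + Matrix.single i j 1

/-- `F_i = I - 2 S_{i,i}`. -/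
def Fmat (g : ℕ) (i : Fin g) : Matrix (Fin g) (Fin g) ℤ := 1 - 2 • Matrix.single i i 1

/-- `A_{i,j} = I + S_{i,j} - S_{i,i} - S_{j,j}`, the transposition permutation matrix. -/
def Amat (g : ℕ) (i j : Fin g) : Matrix (Fin g) (Fin g) ℤ :=
  1 + Smat g i j - Smat g i i - Smat g j j

/-- `Y_{i,j} = [[I, S_{i,j}],[0, I]]`. -/
def Ymat (g : ℕ) (i j : Fin g) : Matrix (Fin g ⊕ Fin g) (Fin g ⊕ Fin g) ℤ :=
  fromBlocks 1 (Smat g i j) 0 1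

/-- `X_{i,j} = [[E_{i,j}, 0],[0, ᵗE_{i,j}⁻¹]]` (the paper's `-E_{j,i}` denotes `ᵗE_{i,j}⁻¹`). -/
noncomputable def Xmat (g : ℕ) (i j : Fin g) : Matrix (Fin g ⊕ Fin g) (Fin g ⊕ Fin g) ℤ :=
  fromBlocks (Emat g i j) 0 0 ((Emat g i j)⁻¹)ᵀ

/-- `Z_i = [[F_i, 0],[0, F_i]]`. -/
def Zmat (g : ℕ) (i : Fin g) : Matrix (Fin g ⊕ Fin g) (Fin g ⊕ Fin g) ℤ :=
  fromBlocks (Fmat g i) 0 0 (Fmat g i)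

/-- `S_g = {[[I, B],[0, I]] : B symmetric}`. -/
def SgSet (g : ℕ) : Set (Matrix (Fin g ⊕ Fin g) (Fin g ⊕ Fin g) ℤ) :=
  {X | ∃ B : Matrix (Fin g) (Fin g) ℤ, B.IsSymm ∧ X = fromBlocks 1 B 0 1}

/-- `GL(g, ℤ)` as the set of integer matrices with unit determinant. -/
def GLSet (g : ℕ) : Set (Matrix (Fin g) (Fin g) ℤ) := {X | IsUnit X.det}

/-- The level-`d` principal congruence subgroup `Γ_d(g)` of `GL(g, ℤ)`. -/
def GammaSet (d g : ℕ) : Set (Matrix (Fin g) (Fin g) ℤ) :=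
  {X | IsUnit X.det ∧ X.map (fun a : ℤ => (a : ZMod d)) = 1}

/-- The normal closure of `S` in the group `U` (a subset of invertible matrices),
described as the set of products of `U`-conjugates of elements of `S` and their inverses. -/
def ncl {n : Type*} [Fintype n] [DecidableEq n]
    (U S : Set (Matrix n n ℤ)) : Set (Matrix n n ℤ) :=
  ↑(Submonoid.closure {m | ∃ u ∈ U, ∃ y ∈ S, m = u * y * u⁻¹ ∨ m = u * y⁻¹ * u⁻¹})

/-! Conjugating `Y_{1,1}^d = [[I, d S_{1,1}],[0, I]]` by `diag(A, ᵗA⁻¹)` gives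
`[[I, d v ᵗv],[0, I]]` with `v` the first column of `A`. As `B ↦ [[I, B],[0, I]]` turns sums
into products, the `B` with `[[I, ±d B],[0, I]]` in the normal closure form a group. Taking
`v = e_i` (a permutation matrix) and `v = e_i + e_j` (a transvection times it) puts every
`S_{i,j}` in this group, hence every symmetric matrix; and a symmetric `B ≡ 0 mod d` is `d` times
a symmetric matrix. -/

namespace Matrix

variable {n R : Type*} [CommRing R]

lemma mul_vecMulVec_mul_transpose [Fintype n] (A : Matrix n n R) (v : n → R) :
    A * vecMulVec v v * Aᵀ = vecMulVec (A *ᵥ v) (A *ᵥ v) := by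
  rw [mul_vecMulVec, vecMulVec_mul, vecMul_transpose]

variable [DecidableEq n]

def upperUnipotent (B : Matrix n n R) : Matrix (n ⊕ n) (n ⊕ n) R :=
  fromBlocks 1 B 0 1

@[simp]
lemma upperUnipotent_zero : upperUnipotent (0 : Matrix n n R) = 1 :=
  fromBlocks_one

variable [Fintype n]

lemma upperUnipotent_add (B C : Matrix n n R) :
    upperUnipotent (B + C) = upperUnipotent B * upperUnipotent C := by
  simp [upperUnipotent, fromBlocks_multiply, add_comm]

lemma upperUnipotent_pow (B : Matrix n n R) (k : ℕ) :
    upperUnipotent B ^ k = upperUnipotent (k • B) := by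
  induction k with
  | zero => simp
  | succ k ih => rw [pow_succ, ih, ← upperUnipotent_add, succ_nsmul]

lemma upperUnipotent_inv (B : Matrix n n R) : (upperUnipotent B)⁻¹ = upperUnipotent (-B) :=
  inv_eq_right_inv (by rw [← upperUnipotent_add, add_neg_cancel, upperUnipotent_zero])

noncomputable def blockDiagInvTranspose (A : Matrix n n R) : Matrix (n ⊕ n) (n ⊕ n) R :=
  fromBlocks A 0 0 (A⁻¹)ᵀ

variable {A : Matrix n n R}

lemma blockDiagInvTranspose_inv (hA : IsUnit A.det) :
    (blockDiagInvTranspose A)⁻¹ = fromBlocks A⁻¹ 0 0 Aᵀ :=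
  inv_eq_right_inv <| by
    simp [blockDiagInvTranspose, fromBlocks_multiply, mul_nonsing_inv A hA, ← transpose_mul,
      fromBlocks_one]

lemma blockDiagInvTranspose_conj_upperUnipotent (hA : IsUnit A.det) (B : Matrix n n R) :
    blockDiagInvTranspose A * upperUnipotent B * (blockDiagInvTranspose A)⁻¹ =
      upperUnipotent (A * B * Aᵀ) := by
  rw [blockDiagInvTranspose_inv hA, blockDiagInvTranspose, upperUnipotent, upperUnipotent,
    fromBlocks_multiply, fromBlocks_multiply]
  simp [mul_nonsing_inv A hA, ← transpose_mul, Matrix.mul_assoc]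

end Matrix

open Matrix

lemma blockDiagInvTranspose_mem_urSpSet {g : ℕ} {A : Matrix (Fin g) (Fin g) ℤ}
    (hA : IsUnit A.det) : blockDiagInvTranspose A ∈ urSpSet g := by
  refine ⟨⟨?_, ?_⟩, by simp [blockDiagInvTranspose]⟩
  · rw [blockDiagInvTranspose, det_fromBlocks_zero₂₁, det_transpose]
    exact hA.mul (A.isUnit_nonsing_inv_det hA)
  · rw [blockDiagInvTranspose, Jmat, fromBlocks_transpose, fromBlocks_multiply,
      fromBlocks_multiply]
    simp [← transpose_mul, nonsing_inv_mul A hA]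

section NormalClosure

variable {m : Type*} [Fintype m] [DecidableEq m] {U S : Set (Matrix m m ℤ)}

lemma one_mem_ncl : (1 : Matrix m m ℤ) ∈ ncl U S :=
  (Submonoid.closure _).one_mem

lemma mul_mem_ncl {a b : Matrix m m ℤ} (ha : a ∈ ncl U S) (hb : b ∈ ncl U S) :
    a * b ∈ ncl U S :=
  (Submonoid.closure _).mul_mem ha hb

lemma conj_mem_ncl {u y : Matrix m m ℤ} (hu : u ∈ U) (hy : y ∈ S) :
    u * y * u⁻¹ ∈ ncl U S :=
  Submonoid.subset_closure ⟨u, hu, y, hy, .inl rfl⟩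

lemma conj_inv_mem_ncl {u y : Matrix m m ℤ} (hu : u ∈ U) (hy : y ∈ S) :
    u * y⁻¹ * u⁻¹ ∈ ncl U S :=
  Submonoid.subset_closure ⟨u, hu, y, hy, .inr rfl⟩

variable {n : Type*} [Fintype n] [DecidableEq n]

/-- `ncl U S` is only a monoid closure, so both signs are recorded to get a group. -/
def nclUnipotentLattice (U S : Set (Matrix (n ⊕ n) (n ⊕ n) ℤ)) :
    AddSubgroup (Matrix n n ℤ) where
  carrier := {C | upperUnipotent C ∈ ncl U S ∧ upperUnipotent (-C) ∈ ncl U S}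
  zero_mem' := by simpa using one_mem_ncl
  add_mem' := fun ha hb => by
    rw [Set.mem_ofPred_eq, neg_add, upperUnipotent_add, upperUnipotent_add]
    exact ⟨mul_mem_ncl ha.1 hb.1, mul_mem_ncl ha.2 hb.2⟩
  neg_mem' := fun ha => by simpa [and_comm] using ha

end NormalClosure

lemma Smat_self_eq_vecMulVec {g : ℕ} (i : Fin g) :
    Smat g i i = vecMulVec (Pi.single i 1) (Pi.single i 1) := by
  ext k l
  by_cases hk : k = i <;> by_cases hl : l = i <;> simp [Smat, vecMulVec_apply, hk, hl]

lemma vecMulVec_single_add_single {g : ℕ} {i j : Fin g} (hij : i ≠ j) :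
    vecMulVec (Pi.single i 1 + Pi.single j 1) (Pi.single i 1 + Pi.single j 1) =
      Smat g i i + Smat g j j + Smat g i j := by
  ext k l
  by_cases hki : k = i <;> by_cases hkj : k = j <;> by_cases hli : l = i <;>
    by_cases hlj : l = j <;> simp_all [Smat, vecMulVec_apply]

section Generators

variable {g d : ℕ} {i₀ : Fin g}

lemma nsmul_vecMulVec_mem_nclUnipotentLattice {A : Matrix (Fin g) (Fin g) ℤ}
    (hA : IsUnit A.det) :
    d • vecMulVec (A *ᵥ Pi.single i₀ 1) (A *ᵥ Pi.single i₀ 1) ∈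
      nclUnipotentLattice (urSpSet g) {Ymat g i₀ i₀ ^ d} := by
  have hY : Ymat g i₀ i₀ ^ d =
      upperUnipotent (d • vecMulVec (Pi.single i₀ 1) (Pi.single i₀ 1)) := by
    rw [← Smat_self_eq_vecMulVec, ← upperUnipotent_pow]; rfl
  have hu := blockDiagInvTranspose_mem_urSpSet hA
  constructor
  · convert conj_mem_ncl hu (Set.mem_singleton (Ymat g i₀ i₀ ^ d)) using 1
    rw [hY, blockDiagInvTranspose_conj_upperUnipotent hA, Matrix.mul_smul, Matrix.smul_mul,
      mul_vecMulVec_mul_transpose]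
  · convert conj_inv_mem_ncl hu (Set.mem_singleton (Ymat g i₀ i₀ ^ d)) using 1
    rw [hY, upperUnipotent_inv, blockDiagInvTranspose_conj_upperUnipotent hA, Matrix.mul_neg,
      Matrix.neg_mul, Matrix.mul_smul, Matrix.smul_mul, mul_vecMulVec_mul_transpose]

lemma isUnit_det_swap_permMatrix (i j : Fin g) : IsUnit ((Equiv.swap i j).permMatrix ℤ).det := by
  rw [det_permutation]
  exact Units.isUnit _

lemma swap_permMatrix_mulVec_single (i j : Fin g) :
    (Equiv.swap i j).permMatrix ℤ *ᵥ Pi.single i 1 = Pi.single j 1 := by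
  ext k
  by_cases hk : k = j <;> simp [Equiv.swap_apply_eq_iff, hk]

lemma nsmul_Smat_self_mem_nclUnipotentLattice (i : Fin g) :
    d • Smat g i i ∈ nclUnipotentLattice (urSpSet g) {Ymat g i₀ i₀ ^ d} := by
  have h := nsmul_vecMulVec_mem_nclUnipotentLattice (d := d) (i₀ := i₀)
    (isUnit_det_swap_permMatrix i₀ i)
  rwa [swap_permMatrix_mulVec_single, ← Smat_self_eq_vecMulVec] at h

lemma nsmul_Smat_mem_nclUnipotentLattice (i j : Fin g) :
    d • Smat g i j ∈ nclUnipotentLattice (urSpSet g) {Ymat g i₀ i₀ ^ d} := by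
  rcases eq_or_ne i j with rfl | hij
  · exact nsmul_Smat_self_mem_nclUnipotentLattice i
  have hA : IsUnit (transvection j i (1 : ℤ) * (Equiv.swap i₀ i).permMatrix ℤ).det := by
    rw [det_mul, det_transvection_of_ne j i hij.symm, one_mul]
    exact isUnit_det_swap_permMatrix i₀ i
  have hv : (transvection j i (1 : ℤ) * (Equiv.swap i₀ i).permMatrix ℤ) *ᵥ
      Pi.single i₀ 1 = Pi.single i 1 + Pi.single j 1 := by
    rw [← mulVec_mulVec, swap_permMatrix_mulVec_single, transvection, add_mulVec, one_mulVec,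
      single_mulVec, Pi.single_eq_same, mul_one]
    rfl
  have h := nsmul_vecMulVec_mem_nclUnipotentLattice (d := d) (i₀ := i₀) hA
  rw [hv, vecMulVec_single_add_single hij] at h
  have hsum : d • Smat g i j = d • (Smat g i i + Smat g j j + Smat g i j) - d • Smat g i i -
      d • Smat g j j := by
    simp only [smul_add]; abel
  rw [hsum]
  exact sub_mem (sub_mem h (nsmul_Smat_self_mem_nclUnipotentLattice i))
    (nsmul_Smat_self_mem_nclUnipotentLattice j)

end Generators

lemma Matrix.IsSymm.eq_sum_smul_Smat {g : ℕ} {B : Matrix (Fin g) (Fin g) ℤ} (hB : B.IsSymm) :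
    B = ∑ p ∈ Finset.univ.filter (fun p : Fin g × Fin g => p.1 ≤ p.2),
      B p.1 p.2 • Smat g p.1 p.2 := by
  ext k l
  rw [sum_apply]
  simp only [smul_apply, Smat, of_apply, smul_eq_mul, mul_ite, mul_one, mul_zero]
  rcases le_total k l with hkl | hlk
  · rw [Finset.sum_eq_single_of_mem (k, l) (by simpa using hkl)]
    · simp
    · intro p hp hne
      simp only [Finset.mem_filter] at hp
      grind
  · rw [Finset.sum_eq_single_of_mem (l, k) (by simpa using hlk), hB.apply]
    · simp
    · intro p hp hne
      simp only [Finset.mem_filter] at hp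
      grind

lemma Matrix.IsSymm.exists_isSymm_nsmul_eq {n : Type*} {B : Matrix n n ℤ} (hB : B.IsSymm)
    {d : ℕ} (hdvd : ∀ k l, (d : ℤ) ∣ B k l) :
    ∃ B' : Matrix n n ℤ, B'.IsSymm ∧ d • B' = B :=
  ⟨of fun k l => B k l / d, by ext k l; simp [hB.apply], by
    ext k l; simp [Int.mul_ediv_cancel' (hdvd k l)]⟩

lemma dvd_of_upperUnipotent_map_eq_one {n : Type*} [DecidableEq n] {B : Matrix n n ℤ} {d : ℕ}
    (h : (upperUnipotent B).map (fun a : ℤ => (a : ZMod d)) = 1) (k l : n) :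
    (d : ℤ) ∣ B k l := by
  have hkl := congr_fun₂ h (Sum.inl k) (Sum.inr l)
  simp only [upperUnipotent, map_apply, fromBlocks_apply₁₂, one_apply, reduceCtorEq,
    if_false] at hkl
  exact (ZMod.intCast_zmod_eq_zero_iff_dvd _ d).1 hkl

lemma nsmul_mem_nclUnipotentLattice_of_isSymm {g d : ℕ} {i₀ : Fin g}
    {B : Matrix (Fin g) (Fin g) ℤ} (hB : B.IsSymm) :
    d • B ∈ nclUnipotentLattice (urSpSet g) {Ymat g i₀ i₀ ^ d} := by
  rw [hB.eq_sum_smul_Smat, Finset.smul_sum]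
  refine sum_mem fun p _ => ?_
  rw [smul_comm]
  exact zsmul_mem (nsmul_Smat_mem_nclUnipotentLattice p.1 p.2) _

/-- For `g ≥ 1`, `d ≥ 2`, `S_g[d]` is contained in the normal closure of `Y_{1,1}^d`
in `urSp(2g)`. -/
theorem stmt13 (g d : ℕ) (hg : 1 ≤ g) :
    {X | X ∈ SgSet g ∧ X.map (fun a : ℤ => (a : ZMod d)) = 1} ⊆
      ncl (urSpSet g) {Ymat g ⟨0, by omega⟩ ⟨0, by omega⟩ ^ d} := by
  rintro X ⟨⟨B, hB, rfl⟩, hmap⟩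
  obtain ⟨B', hB', rfl⟩ := hB.exists_isSymm_nsmul_eq (dvd_of_upperUnipotent_map_eq_one hmap)
  exact (nsmul_mem_nclUnipotentLattice_of_isSymm hB').1
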